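/- arXiv:2506.05724 — 2 statements merged into one kernel-verified Lean document; each statement's English description precedes it below -/
import Mathlib

section
/- Let a, t0 ∈ ℂ*, ε ∈ ℂ with |ε| < 1, and let t_n = t0(1+ε)^n. Suppose (f_n) is a sequence of nonzero complex numbers satisfying f_{n+1} f_{n-1} = a(1 + f_n t_n) / (f_n (f_n + t_n)) for all n ≥ 1 (with all denominators nonzero). Define E_n = (f_{n+1}^2 f_n^2 + t0 f_{n+1} f_n (f_{n+1}+f_n) + a t0 (f_{n+1}+f_n) + a) / (f_{n+1} f_n) and L_n = (a + f_{n+1} f_n)(f_{n+1}+f_n)/(f_{n+1} f_n). Then for all n ≥ 1, E_n - E_{n-1} = -(t_n - t0)(L_n - L_{n-1}). -/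
lemma qP2_key (a t0 s x y z : ℂ) (hx : x ≠ 0) (hy : y ≠ 0) (hz : z ≠ 0)
    (h : z * x * (y * (y + s)) = a * (1 + y * s)) :
    (z ^ 2 * y ^ 2 + t0 * z * y * (z + y) + a * t0 * (z + y) + a) / (z * y)
      - (y ^ 2 * x ^ 2 + t0 * y * x * (y + x) + a * t0 * (y + x) + a) / (y * x)
    = -(s - t0) * ((a + z * y) * (z + y) / (z * y) - (a + y * x) * (y + x) / (y * x)) := by
  field_simp
  linear_combination (z - x) * h

theorem stmt_0 (a t0 ε : ℂ) (ha : a ≠ 0) (ht0 : t0 ≠ 0) (hε : ‖ε‖ < 1)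
    (t f E L : ℕ → ℂ)
    (ht : ∀ n, t n = t0 * (1 + ε) ^ n)
    (hf0 : ∀ n, f n ≠ 0)
    (hft : ∀ n, f n + t n ≠ 0)
    (hrec : ∀ n, 1 ≤ n → f (n + 1) * f (n - 1) = a * (1 + f n * t n) / (f n * (f n + t n)))
    (hE : ∀ n, E n = (f (n + 1) ^ 2 * f n ^ 2 + t0 * f (n + 1) * f n * (f (n + 1) + f n)
        + a * t0 * (f (n + 1) + f n) + a) / (f (n + 1) * f n))
    (hL : ∀ n, L n = (a + f (n + 1) * f n) * (f (n + 1) + f n) / (f (n + 1) * f n)) :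
    ∀ n, 1 ≤ n → E n - E (n - 1) = -(t n - t0) * (L n - L (n - 1)) := by
  rintro (_ | m) hn
  · omega
  have hrec' := hrec (m + 1) (Nat.le_add_left 1 m)
  simp only [Nat.add_sub_cancel] at hrec'
  have h : f (m + 2) * f m * (f (m + 1) * (f (m + 1) + t (m + 1)))
      = a * (1 + f (m + 1) * t (m + 1)) := by
    rw [hrec', div_mul_cancel₀]
    exact mul_ne_zero (hf0 (m + 1)) (hft (m + 1))
  simp only [Nat.add_sub_cancel, hE, hL]
  exact qP2_key a t0 (t (m + 1)) (f m) (f (m + 1)) (f (m + 2))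
    (hf0 m) (hf0 (m + 1)) (hf0 (m + 2)) h
end

section
/- Let t0 ∈ ℂ*, 0 < |ε| < 1, n ∈ ℕ, J > 0, and let (L_k) satisfy |L_k| ≤ J for 0 ≤ k ≤ n. With P̃_k = t0((1+ε)^k - 1 - εk), the quantity M_n = -P̃_n L_n + t0 ε Σ_{k=0}^{n-1} L_k (P̃_k/t0 + εk) satisfies |M_n| < 2|t0| J (e^{|ε|n} - 1 - |ε|n), provided n ≥ 2. -/
open Finset

lemma aux_A (ε : ℂ) : ∀ k : ℕ, ‖(1+ε)^k - 1 - ε*k‖ ≤ (1+‖ε‖)^k - 1 - ‖ε‖*k := by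
  intro k
  induction k with
  | zero => simp
  | succ k ih =>
    have key : (1+ε)^(k+1) - 1 - ε*((k:ℕ)+1 : ℕ) = (1+ε)*((1+ε)^k - 1 - ε*k) + ε^2*k := by
      push_cast; ring
    have key2 : (1+‖ε‖)^(k+1) - 1 - ‖ε‖*((k+1:ℕ):ℝ)
        = (1+‖ε‖)*((1+‖ε‖)^k - 1 - ‖ε‖*k) + ‖ε‖^2*k := by
      push_cast; ring
    rw [key, key2]
    have hB : (0:ℝ) ≤ (1+‖ε‖)^k - 1 - ‖ε‖*k := le_trans (norm_nonneg _) ih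
    calc ‖(1+ε)*((1+ε)^k - 1 - ε*k) + ε^2*(k:ℂ)‖
        ≤ ‖1+ε‖*‖(1+ε)^k - 1 - ε*k‖ + ‖ε‖^2*k := by
          refine (norm_add_le _ _).trans ?_
          rw [norm_mul, norm_mul, norm_pow, Complex.norm_natCast]
      _ ≤ (1+‖ε‖)*((1+‖ε‖)^k - 1 - ‖ε‖*k) + ‖ε‖^2*k := by
          have hne : ‖1+ε‖ ≤ 1+‖ε‖ := le_trans (norm_add_le _ _) (by simp)
          gcongr <;> first | exact hne | exact ih

lemma aux_B (ε : ℂ) : ∀ k : ℕ, ‖(1+ε)^k - 1‖ ≤ (1+‖ε‖)^k - 1 := by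
  intro k
  induction k with
  | zero => simp
  | succ k ih =>
    have key : (1+ε)^(k+1) - 1 = (1+ε)*((1+ε)^k - 1) + ε := by ring
    have key2 : (1+‖ε‖)^(k+1) - 1 = (1+‖ε‖)*((1+‖ε‖)^k - 1) + ‖ε‖ := by ring
    rw [key, key2]
    have hB : (0:ℝ) ≤ (1+‖ε‖)^k - 1 := le_trans (norm_nonneg _) ih
    calc ‖(1+ε)*((1+ε)^k - 1) + ε‖
        ≤ ‖1+ε‖*‖(1+ε)^k - 1‖ + ‖ε‖ := by
          refine (norm_add_le _ _).trans ?_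
          rw [norm_mul]
      _ ≤ (1+‖ε‖)*((1+‖ε‖)^k - 1) + ‖ε‖ := by
          have hne : ‖1+ε‖ ≤ 1+‖ε‖ := le_trans (norm_add_le _ _) (by simp)
          gcongr <;> first | exact hne | exact ih

lemma aux_D (x : ℝ) (hx : 0 ≤ x) (n : ℕ) :
    x * ∑ k ∈ Finset.range n, (Real.exp (x*k) - 1) ≤ Real.exp (x*n) - 1 - x*n := by
  have hterm : ∀ k : ℕ, x * (Real.exp (x*k) - 1)
      ≤ Real.exp (x*(k+1)) - Real.exp (x*k) - x := by
    intro k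
    have h1 : Real.exp (x*(k+1)) - Real.exp (x*k) = Real.exp (x*k) * (Real.exp x - 1) := by
      rw [mul_sub, ← Real.exp_add]; ring_nf
    have h2 : x * Real.exp (x*k) ≤ Real.exp (x*k) * (Real.exp x - 1) := by
      rw [mul_comm]
      have := Real.add_one_le_exp x
      have hek : (0:ℝ) < Real.exp (x*k) := Real.exp_pos _
      nlinarith
    have h3 : x ≤ x * Real.exp (x*k) := by
      nlinarith [Real.one_le_exp (mul_nonneg hx (Nat.cast_nonneg k))]
    nlinarith
  calc x * ∑ k ∈ Finset.range n, (Real.exp (x*k) - 1)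
      = ∑ k ∈ Finset.range n, x * (Real.exp (x*k) - 1) := by rw [Finset.mul_sum]
    _ ≤ ∑ k ∈ Finset.range n, (Real.exp (x*(k+1)) - Real.exp (x*k) - x) :=
        Finset.sum_le_sum fun k _ => hterm k
    _ = (Real.exp (x*n) - Real.exp (x*0)) - n*x := by
        rw [Finset.sum_sub_distrib, Finset.sum_const, Finset.card_range]
        have h := Finset.sum_range_sub (fun k : ℕ => Real.exp (x*k)) n
        push_cast at h ⊢
        rw [h, nsmul_eq_mul]
    _ = Real.exp (x*n) - 1 - x*n := by rw [mul_zero, Real.exp_zero]; ring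

theorem stmt_6 (t0 ε : ℂ) (ht0 : t0 ≠ 0) (hε0 : 0 < ‖ε‖) (hε1 : ‖ε‖ < 1)
    (n : ℕ) (hn : 2 ≤ n) (J : ℝ) (hJ : 0 < J)
    (L Pt : ℕ → ℂ)
    (hPt : ∀ k, Pt k = t0 * ((1 + ε) ^ k - 1 - ε * k))
    (hLbd : ∀ k, k ≤ n → ‖L k‖ ≤ J) :
    ‖-Pt n * L n + t0 * ε * ∑ k ∈ Finset.range n, L k * (Pt k / t0 + ε * k)‖ <
      2 * ‖t0‖ * J * (Real.exp (‖ε‖ * n) - 1 - ‖ε‖ * n) := by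
  set x := ‖ε‖ with hxdef
  set T := ‖t0‖ with hTdef
  have hT : 0 < T := norm_pos_iff.mpr ht0
  set E := Real.exp (x*n) - 1 - x*n with hEdef
  have hεx : ε ≠ 0 := norm_ne_zero_iff.mp hε0.ne'
  -- strict comparison (1+x)^n < exp(x*n)
  have hpow : (1+x)^n < Real.exp (x*n) := by
    have h1 : 1 + x < Real.exp x := by
      have := Real.add_one_lt_exp (x := x) hε0.ne'
      linarith
    have h2 : (1+x)^n < (Real.exp x)^n := by
      apply pow_lt_pow_left₀ h1 (by positivity)
      omega
    calc (1+x)^n < (Real.exp x)^n := h2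
      _ = Real.exp (x*n) := by rw [← Real.exp_nat_mul]; ring_nf
  -- first term strict bound
  have hfirst : ‖-Pt n * L n‖ < T * J * E := by
    have h1 : ‖-Pt n * L n‖ = ‖Pt n‖ * ‖L n‖ := by rw [norm_mul, norm_neg]
    have h2 : ‖Pt n‖ ≤ T * ((1+x)^n - 1 - x*n) := by
      rw [hPt, norm_mul]
      exact mul_le_mul_of_nonneg_left (aux_A ε n) (norm_nonneg _)
    have h3 : T * ((1+x)^n - 1 - x*n) < T * E := by
      apply mul_lt_mul_of_pos_left _ hT
      rw [hEdef]; linarith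
    have h4 : ‖Pt n‖ * ‖L n‖ ≤ ‖Pt n‖ * J := by
      exact mul_le_mul_of_nonneg_left (hLbd n le_rfl) (norm_nonneg _)
    calc ‖-Pt n * L n‖ = ‖Pt n‖ * ‖L n‖ := h1
      _ ≤ ‖Pt n‖ * J := h4
      _ ≤ (T * ((1+x)^n - 1 - x*n)) * J := mul_le_mul_of_nonneg_right h2 hJ.le
      _ < (T * E) * J := by
          apply mul_lt_mul_of_pos_right h3 hJ
      _ = T * J * E := by ring
  -- second term
  have hsecond : ‖t0 * ε * ∑ k ∈ Finset.range n, L k * (Pt k / t0 + ε * k)‖ ≤ T * J * E := by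
    have hsimp : ∀ k : ℕ, Pt k / t0 + ε * k = (1+ε)^k - 1 := by
      intro k
      rw [hPt, mul_div_cancel_left₀ _ ht0]
      ring
    have hbd : ∀ k ∈ Finset.range n, ‖L k * (Pt k / t0 + ε * k)‖ ≤ J * (Real.exp (x*k) - 1) := by
      intro k hk
      rw [hsimp, norm_mul]
      have hk' : k ≤ n := le_of_lt (Finset.mem_range.mp hk)
      have hBk : ‖(1+ε)^k - 1‖ ≤ (1+x)^k - 1 := aux_B ε k
      have hpk : (1+x)^k ≤ Real.exp (x*k) := by
        calc (1+x)^k ≤ (Real.exp x)^k := by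
              apply pow_le_pow_left₀ (by positivity)
              linarith [Real.add_one_le_exp x]
          _ = Real.exp (x*k) := by rw [← Real.exp_nat_mul]; ring_nf
      calc ‖L k‖ * ‖(1+ε)^k - 1‖ ≤ J * ((1+x)^k - 1) := by
            apply mul_le_mul (hLbd k hk') hBk (norm_nonneg _) hJ.le
        _ ≤ J * (Real.exp (x*k) - 1) := by
            apply mul_le_mul_of_nonneg_left _ hJ.le
            linarith
    calc ‖t0 * ε * ∑ k ∈ Finset.range n, L k * (Pt k / t0 + ε * k)‖
        ≤ T * x * ∑ k ∈ Finset.range n, ‖L k * (Pt k / t0 + ε * k)‖ := by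
          rw [norm_mul, norm_mul]
          exact mul_le_mul_of_nonneg_left (norm_sum_le _ _) (by positivity)
      _ ≤ T * x * ∑ k ∈ Finset.range n, J * (Real.exp (x*k) - 1) := by
          apply mul_le_mul_of_nonneg_left (Finset.sum_le_sum hbd) (by positivity)
      _ = T * J * (x * ∑ k ∈ Finset.range n, (Real.exp (x*k) - 1)) := by
          rw [← Finset.mul_sum]; ring
      _ ≤ T * J * E := by
          apply mul_le_mul_of_nonneg_left (aux_D x hε0.le n) (by positivity)
  calc ‖-Pt n * L n + t0 * ε * ∑ k ∈ Finset.range n, L k * (Pt k / t0 + ε * k)‖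
      ≤ ‖-Pt n * L n‖ + ‖t0 * ε * ∑ k ∈ Finset.range n, L k * (Pt k / t0 + ε * k)‖ :=
        norm_add_le _ _
    _ < T * J * E + T * J * E := add_lt_add_of_lt_of_le hfirst hsecond
    _ = 2 * T * J * E := by ring
end
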